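/- Let B be a finite dimensional semisimple H-module algebra over a field of characteristic 0, where H is a finite dimensional semisimple Hopf algebra. Then B decomposes as a direct sum of ideals B = B₁ ⊕ B₂ ⊕ ... ⊕ B_q where each B_i is an H-invariant ideal that is H-simple (i.e. has no nonzero proper H-invariant two-sided ideals). -/

import Mathlib

/-!
In a semisimple algebra every two-sided ideal `I` has a unit element `e`, so
`B = I ⊕ ann_l(I)` via `b = e b + (b - e b)`. In an `H`-module algebra the left annihilator of an
`H`-stable subspace is `H`-stable, because `(h x) y = ∑ h₁ (x (S h₂ y))`. Hence the
`H`-invariant ideals are closed under intersection and each has an `H`-invariant complement;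
splitting off a minimal nonzero one and recursing (finite dimension) gives the decomposition.
A minimal one is `H`-simple as an algebra in its own right, since its unit turns its ideals into
ideals of `B`.
-/

open TensorProduct HopfAlgebra

section Lattice
variable {α : Type*} [CompleteLattice α] [IsModularLattice α] [WellFoundedLT α] {p : α → Prop}

theorem exists_finset_supIndep_minimal (hinf : ∀ a b, p a → p b → p (a ⊓ b))
    (hcompl : ∀ a, p a → ∃ b, p b ∧ IsCompl a b) {P : α} (hP : p P) :
    ∃ s : Finset α, s.SupIndep id ∧ s.sup id = P ∧ ∀ a ∈ s, Minimal (fun b ↦ p b ∧ b ≠ ⊥) a := by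
  classical
  induction P using WellFoundedLT.induction with | _ P ih =>
  by_cases hP0 : P = ⊥
  · exact ⟨∅, Finset.supIndep_empty _, hP0 ▸ Finset.sup_empty, by simp⟩
  obtain ⟨Q, hQP, hQ⟩ := exists_minimal_le_of_wellFoundedLT (fun b ↦ p b ∧ b ≠ ⊥) P ⟨hP, hP0⟩
  obtain ⟨Q', hQ', hQQ'⟩ := hcompl Q hQ.prop.1
  have hdisj : Disjoint Q (P ⊓ Q') := hQQ'.disjoint.mono_right inf_le_right
  have hsup : Q ⊔ P ⊓ Q' = P := by
    rw [inf_comm, ← sup_inf_assoc_of_le _ hQP, hQQ'.sup_eq_top, top_inf_eq]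
  have hlt : P ⊓ Q' < P := inf_le_left.lt_of_ne fun h ↦
    hQ.prop.2 (hdisj.eq_bot_of_le (hQP.trans h.ge))
  obtain ⟨s, hs, hsR, hmin⟩ := ih _ hlt (hinf P Q' hP hQ')
  refine ⟨insert Q s, hs.insert (by rwa [hsR]), by rw [Finset.sup_insert, hsR, id, hsup], ?_⟩
  simpa [hQ] using hmin

theorem exists_fin_iSupIndep_minimal (hinf : ∀ a b, p a → p b → p (a ⊓ b))
    (hcompl : ∀ a, p a → ∃ b, p b ∧ IsCompl a b) {P : α} (hP : p P) :
    ∃ (q : ℕ) (Bs : Fin q → α), iSupIndep Bs ∧ ⨆ i, Bs i = P ∧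
      ∀ i, Minimal (fun b ↦ p b ∧ b ≠ ⊥) (Bs i) := by
  obtain ⟨s, hs, hsP, hmin⟩ := exists_finset_supIndep_minimal hinf hcompl hP
  refine ⟨s.card, fun i ↦ s.equivFin.symm i, hs.independent.comp s.equivFin.symm.injective, ?_,
    fun i ↦ hmin _ (s.equivFin.symm i).2⟩
  rw [← hsP, s.equivFin.symm.iSup_comp (g := fun a : s ↦ (a : α)), Finset.sup_eq_iSup,
    iSup_subtype']
  rfl

end Lattice

theorem Ideal.exists_mem_forall_mul_eq_self {R : Type*} [Ring R] [IsSemisimpleRing R]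
    (I : Ideal R) : ∃ e ∈ I, ∀ x ∈ I, x * e = x := by
  obtain ⟨e, he, rfl⟩ := IsSemisimpleRing.ideal_eq_span_idempotent I
  refine ⟨e, Ideal.mem_span_singleton_self e, fun x hx ↦ ?_⟩
  obtain ⟨a, rfl⟩ := Ideal.mem_span_singleton'.mp hx
  rw [mul_assoc, he.eq]

/-- The left unit comes from the right unit of `I` viewed in the (again semisimple) opposite
ring, and a left and a right unit of `I` coincide. -/
theorem TwoSidedIdeal.exists_mem_forall_mul_eq_self {R : Type*} [Ring R] [IsSemisimpleRing R]
    (I : TwoSidedIdeal R) : ∃ e ∈ I, ∀ x ∈ I, e * x = x ∧ x * e = x := by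
  obtain ⟨e, he, hxe⟩ := I.asIdeal.exists_mem_forall_mul_eq_self
  obtain ⟨f, hf, hfx⟩ := I.asIdealOpposite.exists_mem_forall_mul_eq_self
  have hfx' (x : R) (hx : x ∈ I) : f.unop * x = x :=
    congrArg MulOpposite.unop (hfx (.op x) (mem_asIdealOpposite.mpr hx))
  have hfe : f.unop = e :=
    (hxe _ (mem_asIdealOpposite.mp hf)).symm.trans (hfx' e (mem_asIdeal.mp he))
  exact ⟨e, mem_asIdeal.mp he, fun x hx ↦ ⟨hfe ▸ hfx' x hx, hxe x (mem_asIdeal.mpr hx)⟩⟩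

namespace Submodule
variable {F B : Type*} [CommRing F] [Ring B] [Algebra F B]

theorem exists_mem_forall_mul_eq_self [IsSemisimpleRing B] (I : Submodule F B)
    (hI : ∀ b : B, ∀ x ∈ I, b * x ∈ I ∧ x * b ∈ I) :
    ∃ e ∈ I, ∀ x ∈ I, e * x = x ∧ x * e = x := by
  simpa using (TwoSidedIdeal.mk' I I.zero_mem I.add_mem I.neg_mem
    (fun {b _} hy ↦ (hI b _ hy).1) (fun {_ b} hx ↦ (hI b _ hx).2)).exists_mem_forall_mul_eq_self

def leftAnnihilator (I : Submodule F B) : Submodule F B :=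
  ⨅ y ∈ I, LinearMap.ker (LinearMap.mulRight F y)

theorem mem_leftAnnihilator {I : Submodule F B} {x : B} :
    x ∈ I.leftAnnihilator ↔ ∀ y ∈ I, x * y = 0 := by
  simp [leftAnnihilator]

theorem isCompl_leftAnnihilator [IsSemisimpleRing B] {I : Submodule F B}
    (hI : ∀ b : B, ∀ x ∈ I, b * x ∈ I ∧ x * b ∈ I) : IsCompl I I.leftAnnihilator := by
  obtain ⟨e, he, hunit⟩ := I.exists_mem_forall_mul_eq_self hI
  refine ⟨disjoint_def.mpr fun x hxI hxA ↦ ?_, codisjoint_iff_le_sup.mpr fun b _ ↦ ?_⟩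
  · rw [← (hunit x hxI).2, mem_leftAnnihilator.mp hxA e he]
  · have hcompl : b - e * b ∈ I.leftAnnihilator := mem_leftAnnihilator.mpr fun y hy ↦ by
      rw [sub_mul, mul_assoc, (hunit _ (hI b y hy).1).1, sub_self]
    simpa using add_mem_sup ((hI b e he).2) hcompl

theorem exists_mul_ne_zero_of_mul_mem [IsSemisimpleRing B] {J : Submodule F B}
    (hJ : ∀ b : B, ∀ x ∈ J, b * x ∈ J ∧ x * b ∈ J) (hne : J ≠ ⊥) :
    ∃ x ∈ J, ∃ y ∈ J, x * y ≠ 0 := by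
  obtain ⟨e, he, hunit⟩ := J.exists_mem_forall_mul_eq_self hJ
  refine ⟨e, he, e, he, fun hee ↦ hne (eq_bot_iff.mpr fun y hy ↦ ?_)⟩
  rw [(hunit e he).1] at hee
  rw [mem_bot, ← (hunit y hy).1, hee, zero_mul]

theorem mul_mem_of_le_of_mul_mem [IsSemisimpleRing B] {I J : Submodule F B}
    (hJ : ∀ b : B, ∀ x ∈ J, b * x ∈ J ∧ x * b ∈ J) (hIJ : I ≤ J)
    (hI : ∀ b ∈ J, ∀ x ∈ I, b * x ∈ I ∧ x * b ∈ I) :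
    ∀ b : B, ∀ x ∈ I, b * x ∈ I ∧ x * b ∈ I := by
  obtain ⟨e, he, hunit⟩ := J.exists_mem_forall_mul_eq_self hJ
  intro b x hx
  constructor
  · rw [← (hunit x (hIJ hx)).1, ← mul_assoc]
    exact (hI _ (hJ b e he).1 _ hx).1
  · rw [← (hunit x (hIJ hx)).2, mul_assoc]
    exact (hI _ (hJ b e he).2 _ hx).2

end Submodule

section InvariantIdeal
variable {F H B : Type*} [CommSemiring F] [Semiring H] [Algebra F H] [Semiring B] [Algebra F B]

structure IsInvariantIdeal (ρ : H →ₐ[F] Module.End F B) (I : Submodule F B) : Prop where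
  mul_mem : ∀ b : B, ∀ x ∈ I, b * x ∈ I ∧ x * b ∈ I
  apply_mem : ∀ h : H, ∀ x ∈ I, ρ h x ∈ I

variable {ρ : H →ₐ[F] Module.End F B}

theorem IsInvariantIdeal.top : IsInvariantIdeal ρ ⊤ :=
  ⟨fun _ _ _ ↦ ⟨Submodule.mem_top, Submodule.mem_top⟩, fun _ _ _ ↦ Submodule.mem_top⟩

theorem IsInvariantIdeal.inf {I J : Submodule F B} (hI : IsInvariantIdeal ρ I)
    (hJ : IsInvariantIdeal ρ J) : IsInvariantIdeal ρ (I ⊓ J) where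
  mul_mem b x hx :=
    ⟨⟨(hI.mul_mem b x hx.1).1, (hJ.mul_mem b x hx.2).1⟩,
      ⟨(hI.mul_mem b x hx.1).2, (hJ.mul_mem b x hx.2).2⟩⟩
  apply_mem h x hx := ⟨hI.apply_mem h x hx.1, hJ.apply_mem h x hx.2⟩

end InvariantIdeal

section ModuleAlgebra
open Coalgebra (Repr comul counit sum_tmul_counit_eq sum_tmul_tmul_eq)
open scoped Coalgebra

variable {F H B : Type*} [CommRing F] [Ring H] [HopfAlgebra F H] [Ring B] [Algebra F B]

theorem Coalgebra.Repr.sum_counit_smul_left {h : H} {ι : Type*} (𝓡 : Repr F h ι) :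
    ∑ i ∈ 𝓡.index, counit (R := F) (𝓡.right i) • 𝓡.left i = h := by
  simpa only [map_sum, rid_tmul, one_smul] using
    congrArg (_root_.TensorProduct.rid F H) (sum_tmul_counit_eq 𝓡)

def IsModuleAlgebra (ρ : H →ₐ[F] Module.End F B) : Prop :=
  ∀ (h : H) (a b : B), ρ h (a * b) = LinearMap.mul' F B
    ((TensorProduct.homTensorHomMap (RingHom.id F) B B B B)
      ((TensorProduct.map ρ.toLinearMap ρ.toLinearMap) (comul h)) (a ⊗ₜ[F] b))

variable {ρ : H →ₐ[F] Module.End F B}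

theorem IsModuleAlgebra.apply_mul (hρ : IsModuleAlgebra ρ) {h : H} {ι : Type*} (𝓡 : Repr F h ι)
    (a b : B) : ρ h (a * b) = ∑ i ∈ 𝓡.index, ρ (𝓡.left i) a * ρ (𝓡.right i) b := by
  simp [hρ h, ← 𝓡.eq, map_sum, TensorProduct.homTensorHomMap_apply]

variable (ρ) in
noncomputable def actMulActAntipode (x y : B) : H ⊗[F] (H ⊗[F] H) →ₗ[F] B :=
  LinearMap.mul' F B ∘ₗ TensorProduct.map (LinearMap.applyₗ x ∘ₗ ρ.toLinearMap)
    (TensorProduct.lift LinearMap.id ∘ₗ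
      TensorProduct.map ρ.toLinearMap (LinearMap.applyₗ y ∘ₗ ρ.toLinearMap ∘ₗ antipode F))

@[simp]
theorem actMulActAntipode_tmul (x y : B) (a b c : H) :
    actMulActAntipode ρ x y (a ⊗ₜ (b ⊗ₜ c)) = ρ a x * ρ b (ρ (antipode F c) y) := by
  simp [actMulActAntipode]

theorem sum_apply_apply_antipode_eq_counit_smul {h : H} {ι : Type*} (𝓡 : Repr F h ι) (y : B) :
    ∑ i ∈ 𝓡.index, ρ (𝓡.left i) (ρ (antipode F (𝓡.right i)) y) = counit (R := F) h • y := by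
  simpa [map_sum, Module.End.mul_apply] using congrArg (ρ · y) (sum_mul_antipode_eq_smul 𝓡)

theorem IsModuleAlgebra.apply_mul_eq_sum (hρ : IsModuleAlgebra ρ) (h : H) (x y : B) :
    ρ h x * y =
      ∑ i ∈ (ℛ F h).index, ρ ((ℛ F h).left i) (x * ρ (antipode F ((ℛ F h).right i)) y) := by
  set 𝓡 := ℛ F h
  calc ρ h x * y = ∑ i ∈ 𝓡.index, ρ (𝓡.left i) x * (counit (R := F) (𝓡.right i) • y) := by
        conv_lhs => rw [← 𝓡.sum_counit_smul_left]
        simp [Finset.sum_mul]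
    _ = ∑ i ∈ 𝓡.index, ∑ j ∈ (ℛ F (𝓡.right i)).index, ρ (𝓡.left i) x *
          ρ ((ℛ F (𝓡.right i)).left j) (ρ (antipode F ((ℛ F (𝓡.right i)).right j)) y) := by
        simp_rw [← Finset.mul_sum, sum_apply_apply_antipode_eq_counit_smul]
    _ = ∑ i ∈ 𝓡.index, ∑ j ∈ (ℛ F (𝓡.left i)).index, ρ ((ℛ F (𝓡.left i)).left j) x *
          ρ ((ℛ F (𝓡.left i)).right j) (ρ (antipode F (𝓡.right i)) y) := by
        simpa [map_sum] using congrArg (actMulActAntipode ρ x y)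
          (sum_tmul_tmul_eq 𝓡 (fun i ↦ ℛ F (𝓡.left i)) (fun i ↦ ℛ F (𝓡.right i))).symm
    _ = _ := by simp_rw [hρ.apply_mul (ℛ F (𝓡.left _))]

theorem IsInvariantIdeal.leftAnnihilator (hρ : IsModuleAlgebra ρ) {I : Submodule F B}
    (hI : IsInvariantIdeal ρ I) : IsInvariantIdeal ρ I.leftAnnihilator where
  mul_mem b x hx := by
    rw [Submodule.mem_leftAnnihilator] at hx
    refine ⟨Submodule.mem_leftAnnihilator.mpr fun y hy ↦ ?_,
      Submodule.mem_leftAnnihilator.mpr fun y hy ↦ ?_⟩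
    · rw [mul_assoc, hx y hy, mul_zero]
    · rw [mul_assoc, hx _ (hI.mul_mem b y hy).1]
  apply_mem h x hx := Submodule.mem_leftAnnihilator.mpr fun y hy ↦ by
    rw [hρ.apply_mul_eq_sum]
    refine Finset.sum_eq_zero fun i _ ↦ ?_
    rw [Submodule.mem_leftAnnihilator.mp hx _ (hI.apply_mem _ y hy), map_zero]

end ModuleAlgebra

theorem hModuleAlgebra_decomposition_general (F : Type*) [Field F]
    (H : Type*) [Ring H] [HopfAlgebra F H]
    (B : Type*) [Ring B] [Algebra F B] [FiniteDimensional F B] [IsSemisimpleRing B]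
    (ρ : H →ₐ[F] Module.End F B)
    (hmod : ∀ (h : H) (a b : B),
      ρ h (a * b) = LinearMap.mul' F B
        ((TensorProduct.homTensorHomMap (RingHom.id F) B B B B)
          ((TensorProduct.map ρ.toLinearMap ρ.toLinearMap) (Coalgebra.comul h))
          (a ⊗ₜ[F] b))) :
    ∃ (q : ℕ) (Bs : Fin q → Submodule F B),
      DirectSum.IsInternal Bs ∧
      (∀ i, ∀ b : B, ∀ x ∈ Bs i, b * x ∈ Bs i ∧ x * b ∈ Bs i) ∧
      (∀ i (h : H), ∀ x ∈ Bs i, ρ h x ∈ Bs i) ∧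
      -- each `Bs i` is `H`-simple:
      (∀ i, (∃ x ∈ Bs i, ∃ y ∈ Bs i, x * y ≠ 0) ∧
        ∀ I : Submodule F B, I ≤ Bs i →
          (∀ b ∈ Bs i, ∀ x ∈ I, b * x ∈ I ∧ x * b ∈ I) →
          (∀ (h : H), ∀ x ∈ I, ρ h x ∈ I) →
          I = ⊥ ∨ I = Bs i) := by
  obtain ⟨q, Bs, hind, hsup, hmin⟩ := exists_fin_iSupIndep_minimal
    (fun _ _ ↦ IsInvariantIdeal.inf)
    (fun I hI ↦ ⟨_, hI.leftAnnihilator hmod, Submodule.isCompl_leftAnnihilator hI.mul_mem⟩)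
    (IsInvariantIdeal.top (ρ := ρ))
  have hideal (i : Fin q) : IsInvariantIdeal ρ (Bs i) := (hmin i).prop.1
  refine ⟨q, Bs, (DirectSum.isInternal_submodule_iff_iSupIndep_and_iSup_eq_top Bs).mpr
      ⟨hind, hsup⟩, fun i ↦ (hideal i).mul_mem, fun i ↦ (hideal i).apply_mem,
    fun i ↦ ⟨?_, fun I hle hmul hinv ↦ ?_⟩⟩
  · exact Submodule.exists_mul_ne_zero_of_mul_mem (hideal i).mul_mem (hmin i).prop.2
  · have hI : IsInvariantIdeal ρ I :=
      ⟨Submodule.mul_mem_of_le_of_mul_mem (hideal i).mul_mem hle hmul, hinv⟩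
    exact or_iff_not_imp_left.mpr fun hbot ↦ (hmin i).eq_of_le ⟨hI, hbot⟩ hle

/-- A finite dimensional semisimple `H`-module algebra over a field of characteristic 0,
where `H` is a finite dimensional semisimple Hopf algebra, decomposes as a direct sum of
`H`-invariant two-sided ideals, each of which is `H`-simple (its multiplication is nonzero
and it has no nonzero proper `H`-invariant two-sided ideal of itself). -/
theorem hModuleAlgebra_decomposition (F : Type*) [Field F] [CharZero F]
    (H : Type*) [Ring H] [HopfAlgebra F H] [FiniteDimensional F H] [IsSemisimpleRing H]
    (B : Type*) [Ring B] [Algebra F B] [FiniteDimensional F B] [IsSemisimpleRing B]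
    (ρ : H →ₐ[F] Module.End F B)
    (hmod : ∀ (h : H) (a b : B),
      ρ h (a * b) = LinearMap.mul' F B
        ((TensorProduct.homTensorHomMap (RingHom.id F) B B B B)
          ((TensorProduct.map ρ.toLinearMap ρ.toLinearMap) (Coalgebra.comul h))
          (a ⊗ₜ[F] b))) :
    ∃ (q : ℕ) (Bs : Fin q → Submodule F B),
      DirectSum.IsInternal Bs ∧
      (∀ i, ∀ b : B, ∀ x ∈ Bs i, b * x ∈ Bs i ∧ x * b ∈ Bs i) ∧
      (∀ i (h : H), ∀ x ∈ Bs i, ρ h x ∈ Bs i) ∧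
      -- each `Bs i` is `H`-simple:
      (∀ i, (∃ x ∈ Bs i, ∃ y ∈ Bs i, x * y ≠ 0) ∧
        ∀ I : Submodule F B, I ≤ Bs i →
          (∀ b ∈ Bs i, ∀ x ∈ I, b * x ∈ I ∧ x * b ∈ I) →
          (∀ (h : H), ∀ x ∈ I, ρ h x ∈ I) →
          I = ⊥ ∨ I = Bs i) :=
  hModuleAlgebra_decomposition_general F H B ρ hmod
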